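/- arXiv:2408.05486 — 2 statements merged into one kernel-verified Lean document; each statement's English description precedes it below -/
import Mathlib

section
/- Let T_{p₁,…,p_ℓ} and T_{p'₁,…,p'_ℓ} be ℓ-dimensional torus CCs satisfying (1) p₁⋯p_ℓ = p'₁⋯p'_ℓ, (2) p_j ≥ 3 and p'_j ≥ 3 for all j, and (3) Σ_{j=1}^{ℓ} ⌊p_j/2⌋ ≠ Σ_{j=1}^{ℓ} ⌊p'_j/2⌋. Then the 𝒜_{0,1}-diameters of T_{p₁,…,p_ℓ} and T_{p'₁,…,p'_ℓ} are different, yet for every HOMP model M, M(T_{p₁,…,p_ℓ}) = M(T_{p'₁,…,p'_ℓ}). -/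
/-! Basic framework: combinatorial complexes, natural neighborhood functions,
CC coverings, Hasse graphs, and higher-order message-passing (HOMP) models. -/

namespace TDL

/-- The raw data of a combinatorial complex over an ambient node type `S`:
a set of cells (finite, nonempty subsets of nodes) and a rank function. -/
structure PreCC (S : Type*) where
  cells : Set (Finset S)
  rk : Finset S → ℕ

/-- A (featureless) combinatorial complex.  The node set is implicitly the set of
elements appearing in cells; every singleton of such a node is a cell of rank `0`,
cells are nonempty, there are finitely many cells, and the rank function is
monotone with respect to inclusion. -/
structure CC (S : Type*) extends PreCC S where
  cells_finite : cells.Finite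
  nonempty_of_mem : ∀ x ∈ cells, x.Nonempty
  singleton_mem : ∀ x ∈ cells, ∀ s ∈ x, ({s} : Finset S) ∈ cells
  rk_singleton : ∀ s : S, ({s} : Finset S) ∈ cells → rk {s} = 0
  rk_mono : ∀ x ∈ cells, ∀ y ∈ cells, x ⊆ y → rk x ≤ rk y

/-- Names of the natural neighborhood functions: `(r₁,r₂)`-adjacency,
coadjacency, incidence and co-incidence. -/
inductive NbhdKind : Type
  | adj (r₁ r₂ : ℕ)
  | coadj (r₁ r₂ : ℕ)
  | inc (r₁ r₂ : ℕ)
  | coinc (r₁ r₂ : ℕ)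
  deriving DecidableEq

/-- The two ranks mentioned by a neighborhood kind are bounded by `ℓ`. -/
def NbhdKind.bounded (ℓ : ℕ) : NbhdKind → Prop
  | .adj r₁ r₂ => r₁ ≤ ℓ ∧ r₂ ≤ ℓ
  | .coadj r₁ r₂ => r₁ ≤ ℓ ∧ r₂ ≤ ℓ
  | .inc r₁ r₂ => r₁ ≤ ℓ ∧ r₂ ≤ ℓ
  | .coinc r₁ r₂ => r₁ ≤ ℓ ∧ r₂ ≤ ℓ

namespace PreCC

variable {S : Type*}

/-- The `r`-skeleton: the set of cells of rank `r`. -/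
def skel (X : PreCC S) (r : ℕ) : Set (Finset S) := {x | x ∈ X.cells ∧ X.rk x = r}

/-- The natural neighborhood functions of a complex. -/
def nbhd (X : PreCC S) : NbhdKind → Finset S → Set (Finset S)
  | .adj r₁ r₂, x => {y | x ∈ X.skel r₁ ∧ y ∈ X.skel r₁ ∧ ∃ z ∈ X.skel r₂, x ⊆ z ∧ y ⊆ z}
  | .coadj r₁ r₂, x => {y | x ∈ X.skel r₁ ∧ y ∈ X.skel r₁ ∧ ∃ z ∈ X.skel r₂, z ⊆ x ∧ z ⊆ y}
  | .inc r₁ r₂, x => {y | x ∈ X.skel r₁ ∧ y ∈ X.skel r₂ ∧ x ⊆ y}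
  | .coinc r₁ r₂, x => {y | x ∈ X.skel r₁ ∧ y ∈ X.skel r₂ ∧ y ⊆ x}

/-- The Hasse graph of a complex: vertices are cells, and `x, y` are joined by an
edge whenever `x ⊆ y` and `rk x = rk y - 1` (or symmetrically). -/
def hasse (X : PreCC S) : SimpleGraph {x : Finset S // x ∈ X.cells} where
  Adj a b := (a.1 ⊆ b.1 ∧ X.rk a.1 + 1 = X.rk b.1) ∨ (b.1 ⊆ a.1 ∧ X.rk b.1 + 1 = X.rk a.1)
  symm := ⟨by
    rintro a b (h | h)
    · exact Or.inr h
    · exact Or.inl h⟩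
  loopless := ⟨by rintro a (⟨-, h⟩ | ⟨-, h⟩) <;> omega⟩

end PreCC

/-- `ρ` is a CC covering of `X` by `Xt`: it maps cells of `Xt` to cells of `X`
surjectively, preserves ranks, and is a local isomorphism with respect to every
natural neighborhood function. -/
structure IsCovering {S' S : Type*} (Xt : PreCC S') (X : PreCC S)
    (ρ : Finset S' → Finset S) : Prop where
  mem : ∀ x' ∈ Xt.cells, ρ x' ∈ X.cells
  surj : ∀ x ∈ X.cells, ∃ x' ∈ Xt.cells, ρ x' = x
  rank : ∀ x' ∈ Xt.cells, X.rk (ρ x') = Xt.rk x'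
  locBij : ∀ x' ∈ Xt.cells, ∀ N : NbhdKind, Set.BijOn ρ (Xt.nbhd N x') (X.nbhd N (ρ x'))

open Classical in
/-- The multiset underlying a finite set (junk value `0` for infinite sets). -/
noncomputable def setMultiset {α : Type*} (s : Set α) : Multiset α :=
  if h : s.Finite then h.toFinset.val else 0

/-- A higher-order message-passing (HOMP) model over a feature space `D`, for
featureless complexes of dimension at most `ℓ`: a number of layers `T`, an initial
constant feature, and, per layer, message functions (per neighborhood function and
rank), permutation-invariant aggregations (functions of multisets), a combination
operator over the family of neighborhood functions with ranks at most `ℓ`,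
activations, and a readout defined on multisets. -/
structure HOMP (D : Type*) (ℓ : ℕ) where
  T : ℕ
  init : D
  msg : ℕ → NbhdKind → ℕ → D → D → D
  agg : ℕ → NbhdKind → Multiset D → D
  comb : ℕ → ({N : NbhdKind // N.bounded ℓ} → D) → D
  act : ℕ → D → D
  readout : Multiset D → D

namespace HOMP

variable {D : Type*} {ℓ : ℕ} {S : Type*}

/-- The cell feature maps computed by a HOMP model on a complex:
`h⁰_x` is the initial constant, and
`h^{t+1}_x = β_t (⊗_N (⊕ {{ m_{t,N,rk x}(h^t_x, h^t_y) : y ∈ N(x) }}))`. -/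
noncomputable def feat (M : HOMP D ℓ) (X : PreCC S) : ℕ → Finset S → D
  | 0, _ => M.init
  | t + 1, x =>
      M.act t <| M.comb t fun N =>
        M.agg t N.1 <|
          (setMultiset (X.nbhd N.1 x)).map fun y =>
            M.msg t N.1 (X.rk x) (M.feat X t x) (M.feat X t y)

/-- The output of a HOMP model: the readout of the multiset of final features. -/
noncomputable def out (M : HOMP D ℓ) (X : PreCC S) : D :=
  M.readout <| (setMultiset X.cells).map fun x => M.feat X M.T x

end HOMP

end TDL

namespace TDL

/-- The cell `s_k` of the `ℓ`-dimensional torus: the set of nodes `s + k'` for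
`k' ≤ k`, with coordinatewise addition modulo `p j`. -/
def torusCell {ℓ : ℕ} (p : Fin ℓ → ℕ) (s : ∀ i, ZMod (p i)) (k : Fin ℓ → Bool) :
    Finset (∀ i, ZMod (p i)) :=
  (Finset.univ.filter fun k' : Fin ℓ → Bool => ∀ i, k' i = true → k i = true).image
    fun k' i => s i + if k' i then 1 else 0

/-- The number of ones in `k ∈ {0,1}^ℓ`, i.e. the rank of the cell `s_k`. -/
def torusRank {ℓ : ℕ} (k : Fin ℓ → Bool) : ℕ :=
  (Finset.univ.filter fun i => k i = true).card

/-- The `ℓ`-dimensional torus combinatorial complex `T_{p₁,…,p_ℓ}`: nodes are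
`ℤ/p₁ × ⋯ × ℤ/p_ℓ`, cells are the sets `s_k`, and the rank of `s_k` is
`k₁ + ⋯ + k_ℓ`. -/
noncomputable def torusPre {ℓ : ℕ} (p : Fin ℓ → ℕ) : PreCC (∀ i, ZMod (p i)) where
  cells := {x | ∃ s k, x = torusCell p s k}
  rk x := sInf {r | ∃ s k, x = torusCell p s k ∧ r = torusRank k}

end TDL

namespace TDL

/-- The graph on the `0`-cells of a complex in which two distinct `0`-cells are
adjacent iff some `1`-cell contains both. -/
def zeroGraph {S : Type*} (X : PreCC S) : SimpleGraph {x : Finset S // x ∈ X.skel 0} where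
  Adj u v := u ≠ v ∧ ∃ z ∈ X.skel 1, u.1 ⊆ z ∧ v.1 ⊆ z
  symm := ⟨by
    rintro u v ⟨hne, z, hz, h₁, h₂⟩
    exact ⟨hne.symm, z, hz, h₂, h₁⟩⟩
  loopless := ⟨by rintro u ⟨hne, -⟩; exact hne rfl⟩

/-- The cycle graph on `ℤ/n`: `i` and `j` are adjacent iff `i − j ≡ ±1`. -/
def cycGraph (n : ℕ) : SimpleGraph (ZMod n) where
  Adj i j := i ≠ j ∧ (i - j = 1 ∨ j - i = 1)
  symm := ⟨by rintro i j ⟨hne, h⟩; exact ⟨hne.symm, h.symm⟩⟩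
  loopless := ⟨by rintro i ⟨hne, -⟩; exact hne rfl⟩

end TDL

/-!
Every torus `T_p` with all `p i ≥ 3` is covered, in the sense of `IsCovering`, by the cubical
lattice `ℤ^ℓ = T_{0,…,0}` (recall `ZMod 0 = ℤ`), through reduction modulo `p` followed by an
arbitrary translation. HOMP features are invariant under coverings, so the feature of a cell `s_k`
of `T_p` is that of the lattice cell `0_k`: it depends neither on `p` nor on `s`, and the output of
a model only sees the number `∏ p i` of cells of each shape `k`.

The `0`-cells of `T_p`, joined when they lie in a common `1`-cell, form the product of the cycles
`ℤ/p i`. Graph distance there is the sum of the cyclic distances, as this sum drops by at most one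
along an edge and can always be decreased by one, so the diameter is `∑ ⌊p i / 2⌋`.
-/

namespace SimpleGraph

variable {V W : Type*} {G : SimpleGraph V} {G' : SimpleGraph W}

lemma Hom.edist_le (f : G →g G') (u v : V) : G'.edist (f u) (f v) ≤ G.edist u v := by
  by_cases h : G.edist u v = ⊤
  · simp [h]
  obtain ⟨w, hw⟩ := exists_walk_of_edist_ne_top h
  rw [← hw, ← w.length_map f]
  exact SimpleGraph.edist_le _

lemma Iso.edist_eq (e : G ≃g G') (u v : V) : G'.edist (e u) (e v) = G.edist u v :=
  le_antisymm (Hom.edist_le e.toHom u v) (by simpa using Hom.edist_le e.symm.toHom (e u) (e v))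

lemma Iso.ediam_eq (e : G ≃g G') : G'.ediam = G.ediam := by
  simp only [ediam_eq_iSup_iSup_edist, ← e.surjective.iSup_comp, e.edist_eq]

lemma Walk.le_length_of_lipschitz {f : V → ℕ} (hlip : ∀ u v, G.Adj u v → f u ≤ f v + 1)
    {a b : V} (w : G.Walk a b) : f a ≤ f b + w.length := by
  induction w with
  | nil => simp
  | cons h _ ih =>
    have := hlip _ _ h
    simp only [Walk.length_cons]
    omega

lemma exists_walk_length_eq_of_descent {b : V} (f : V → ℕ) (hzero : ∀ a, f a = 0 ↔ a = b)
    (hdesc : ∀ a, a ≠ b → ∃ a', G.Adj a a' ∧ f a' + 1 = f a) (a : V) :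
    ∃ w : G.Walk a b, w.length = f a := by
  induction hfa : f a generalizing a with
  | zero =>
    obtain rfl := (hzero a).mp hfa
    exact ⟨.nil, rfl⟩
  | succ n ih =>
    obtain ⟨a', hadj, ha'⟩ := hdesc a fun h => by simp [(hzero a).mpr h] at hfa
    obtain ⟨w, hw⟩ := ih a' (by omega)
    exact ⟨.cons hadj w, by simp [hw]⟩

theorem edist_eq_of_lipschitz_of_descent {b : V} (f : V → ℕ) (hzero : ∀ a, f a = 0 ↔ a = b)
    (hlip : ∀ u v, G.Adj u v → f u ≤ f v + 1)
    (hdesc : ∀ a, a ≠ b → ∃ a', G.Adj a a' ∧ f a' + 1 = f a) (a : V) :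
    G.edist a b = f a := by
  obtain ⟨w, hw⟩ := exists_walk_length_eq_of_descent f hzero hdesc a
  refine le_antisymm (hw ▸ edist_le w) ?_
  obtain ⟨w', hw'⟩ :=
    exists_walk_of_edist_ne_top (ne_top_of_le_ne_top (ENat.natCast_ne_top _) (edist_le w))
  have := w'.le_length_of_lipschitz hlip
  rw [(hzero b).mpr rfl, zero_add] at this
  rw [← hw']
  exact_mod_cast this

end SimpleGraph

namespace ZMod

variable {n : ℕ}

lemma two_ne_zero_of_three_le (hn : 3 ≤ n) : (2 : ZMod n) ≠ 0 := by
  have : ((2 : ℕ) : ZMod n) ≠ 0 := by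
    rw [Ne, natCast_eq_zero_iff]
    exact fun h => by have := Nat.le_of_dvd two_pos h; omega
  simpa using this

lemma natAbs_valMinAbs_add_le_add (a b : ZMod n) :
    (a + b).valMinAbs.natAbs ≤ a.valMinAbs.natAbs + b.valMinAbs.natAbs :=
  (natAbs_valMinAbs_add_le a b).trans (Int.natAbs_add_le _ _)

lemma natAbs_valMinAbs_one_le : (1 : ZMod n).valMinAbs.natAbs ≤ 1 := by
  rcases n with _ | n
  · simp
  · simpa using natAbs_min_of_le_div_two (n + 1) (1 : ZMod (n + 1)).valMinAbs 1 (by simp)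
      (natAbs_valMinAbs_le _)

lemma natAbs_valMinAbs_neg_one_le : (-1 : ZMod n).valMinAbs.natAbs ≤ 1 := by
  rw [natAbs_valMinAbs_neg]
  exact natAbs_valMinAbs_one_le

lemma exists_natAbs_valMinAbs_add_add_one [NeZero n] {x : ZMod n} (hx : x ≠ 0) :
    ∃ e : ZMod n, (e = 1 ∨ e = -1) ∧ (x + e).valMinAbs.natAbs + 1 = x.valMinAbs.natAbs := by
  have hv : x.valMinAbs ≠ 0 := by rwa [Ne, valMinAbs_eq_zero]
  have hI := x.valMinAbs_mem_Ioc
  rw [Set.mem_Ioc] at hI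
  rcases hv.lt_or_gt with hneg | hpos
  · refine ⟨1, Or.inl rfl, ?_⟩
    have : (x + 1).valMinAbs = x.valMinAbs + 1 :=
      (valMinAbs_spec _ _).mpr ⟨by simp, by rw [Set.mem_Ioc]; omega⟩
    omega
  · refine ⟨-1, Or.inr rfl, ?_⟩
    have : (x + -1).valMinAbs = x.valMinAbs - 1 :=
      (valMinAbs_spec _ _).mpr ⟨by simp [sub_eq_add_neg], by rw [Set.mem_Ioc]; omega⟩
    omega

end ZMod

namespace TDL

lemma mem_of_mem_setMultiset {α : Type*} {s : Set α} {a : α} (h : a ∈ setMultiset s) :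
    a ∈ s := by
  unfold setMultiset at h
  split_ifs at h with hs
  · exact hs.mem_toFinset.mp h
  · simp at h

lemma setMultiset_image {α β : Type*} {f : α → β} {s : Set α} (hf : Set.InjOn f s) :
    setMultiset (f '' s) = (setMultiset s).map f := by
  classical
  unfold setMultiset
  by_cases hs : s.Finite
  · rw [dif_pos (hs.image f), dif_pos hs, hs.toFinset_image f (hs.image f),
      Finset.image_val_of_injOn (by simpa using hf)]
  · rw [dif_neg hs, dif_neg ((Set.finite_image_iff hf).not.mpr hs), Multiset.map_zero]

lemma setMultiset_univ {α : Type*} [Fintype α] :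
    setMultiset (Set.univ : Set α) = (Finset.univ : Finset α).val := by
  unfold setMultiset
  rw [dif_pos Set.finite_univ, Set.Finite.toFinset_univ]

namespace PreCC

variable {S : Type*}

def near (X : PreCC S) (x : Finset S) : Set (Finset S) :=
  {y | y ∈ X.cells ∧ ∃ z ∈ X.cells, (x ⊆ z ∧ y ⊆ z) ∨ (z ⊆ x ∧ z ⊆ y)}

lemma mem_cells_of_mem_nbhd {X : PreCC S} {N : NbhdKind} {x y : Finset S}
    (h : y ∈ X.nbhd N x) : y ∈ X.cells := by
  cases N <;> exact h.2.1.1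

lemma nbhd_subset_near (X : PreCC S) (x : Finset S) (N : NbhdKind) : X.nbhd N x ⊆ X.near x := by
  rcases N with ⟨r₁, r₂⟩ | ⟨r₁, r₂⟩ | ⟨r₁, r₂⟩ | ⟨r₁, r₂⟩
  · rintro y ⟨-, hy, z, hz, hxz, hyz⟩
    exact ⟨hy.1, z, hz.1, Or.inl ⟨hxz, hyz⟩⟩
  · rintro y ⟨-, hy, z, hz, hzx, hzy⟩
    exact ⟨hy.1, z, hz.1, Or.inr ⟨hzx, hzy⟩⟩
  · rintro y ⟨-, hy, hxy⟩
    exact ⟨hy.1, y, hy.1, Or.inl ⟨hxy, subset_rfl⟩⟩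
  · rintro y ⟨hx, hy, hyx⟩
    exact ⟨hy.1, x, hx.1, Or.inl ⟨subset_rfl, hyx⟩⟩

end PreCC

theorem IsCovering.feat_eq {S' S D : Type*} {ℓ : ℕ} {Xt : PreCC S'} {X : PreCC S}
    {ρ : Finset S' → Finset S} (hρ : IsCovering Xt X ρ) (M : HOMP D ℓ) (t : ℕ)
    {x' : Finset S'} (hx' : x' ∈ Xt.cells) : M.feat X t (ρ x') = M.feat Xt t x' := by
  induction t generalizing x' with
  | zero => rfl
  | succ t ih =>
    simp only [HOMP.feat]
    rw [hρ.rank x' hx', ih hx']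
    congr 2
    funext N
    rw [← (hρ.locBij x' hx' N).image_eq, setMultiset_image (hρ.locBij x' hx' N).injOn,
      Multiset.map_map]
    refine congrArg _ (Multiset.map_congr rfl fun y' hy' => ?_)
    rw [Function.comp_apply, ih (PreCC.mem_cells_of_mem_nbhd (mem_of_mem_setMultiset hy'))]

section CoveringCriterion

variable {S' S : Type*} {Xt : PreCC S'} {X : PreCC S} {ρ : Finset S' → Finset S}

lemma mapsTo_nbhd_of_mono (mem : ∀ x' ∈ Xt.cells, ρ x' ∈ X.cells)
    (rank : ∀ x' ∈ Xt.cells, X.rk (ρ x') = Xt.rk x')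
    (mono : ∀ x' y', x' ⊆ y' → ρ x' ⊆ ρ y') (x' : Finset S') (N : NbhdKind) :
    Set.MapsTo ρ (Xt.nbhd N x') (X.nbhd N (ρ x')) := by
  have skel {x' r} (h : x' ∈ Xt.skel r) : ρ x' ∈ X.skel r :=
    ⟨mem _ h.1, (rank _ h.1).trans h.2⟩
  rcases N with ⟨r₁, r₂⟩ | ⟨r₁, r₂⟩ | ⟨r₁, r₂⟩ | ⟨r₁, r₂⟩
  · rintro y' ⟨hx, hy, z, hz, hxz, hyz⟩
    exact ⟨skel hx, skel hy, ρ z, skel hz, mono _ _ hxz, mono _ _ hyz⟩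
  · rintro y' ⟨hx, hy, z, hz, hzx, hzy⟩
    exact ⟨skel hx, skel hy, ρ z, skel hz, mono _ _ hzx, mono _ _ hzy⟩
  · rintro y' ⟨hx, hy, hxy⟩
    exact ⟨skel hx, skel hy, mono _ _ hxy⟩
  · rintro y' ⟨hx, hy, hyx⟩
    exact ⟨skel hx, skel hy, mono _ _ hyx⟩

lemma surjOn_nbhd_of_lift (rank : ∀ x' ∈ Xt.cells, X.rk (ρ x') = Xt.rk x')
    (lift_up : ∀ x' ∈ Xt.cells, ∀ y ∈ X.cells, ρ x' ⊆ y →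
      ∃ y' ∈ Xt.cells, x' ⊆ y' ∧ ρ y' = y)
    (lift_down : ∀ x' ∈ Xt.cells, ∀ y ∈ X.cells, y ⊆ ρ x' →
      ∃ y' ∈ Xt.cells, y' ⊆ x' ∧ ρ y' = y)
    {x' : Finset S'} (hx' : x' ∈ Xt.cells) (N : NbhdKind) :
    Set.SurjOn ρ (Xt.nbhd N x') (X.nbhd N (ρ x')) := by
  have skel {x' r} (hx' : x' ∈ Xt.cells) (h : ρ x' ∈ X.skel r) : x' ∈ Xt.skel r :=
    ⟨hx', (rank _ hx').symm.trans h.2⟩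
  rcases N with ⟨r₁, r₂⟩ | ⟨r₁, r₂⟩ | ⟨r₁, r₂⟩ | ⟨r₁, r₂⟩
  · rintro y ⟨hx, hy, z, hz, hxz, hyz⟩
    obtain ⟨z', hz', hxz', rfl⟩ := lift_up x' hx' z hz.1 hxz
    obtain ⟨y', hy', hyz', rfl⟩ := lift_down z' hz' y hy.1 hyz
    exact ⟨y', ⟨skel hx' hx, skel hy' hy, z', skel hz' hz, hxz', hyz'⟩, rfl⟩
  · rintro y ⟨hx, hy, z, hz, hzx, hzy⟩
    obtain ⟨z', hz', hzx', rfl⟩ := lift_down x' hx' z hz.1 hzx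
    obtain ⟨y', hy', hzy', rfl⟩ := lift_up z' hz' y hy.1 hzy
    exact ⟨y', ⟨skel hx' hx, skel hy' hy, z', skel hz' hz, hzx', hzy'⟩, rfl⟩
  · rintro y ⟨hx, hy, hxy⟩
    obtain ⟨y', hy', hxy', rfl⟩ := lift_up x' hx' y hy.1 hxy
    exact ⟨y', ⟨skel hx' hx, skel hy' hy, hxy'⟩, rfl⟩
  · rintro y ⟨hx, hy, hyx⟩
    obtain ⟨y', hy', hyx', rfl⟩ := lift_down x' hx' y hy.1 hyx
    exact ⟨y', ⟨skel hx' hx, skel hy' hy, hyx'⟩, rfl⟩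

theorem isCovering_of_lift (mem : ∀ x' ∈ Xt.cells, ρ x' ∈ X.cells)
    (surj : ∀ x ∈ X.cells, ∃ x' ∈ Xt.cells, ρ x' = x)
    (rank : ∀ x' ∈ Xt.cells, X.rk (ρ x') = Xt.rk x')
    (mono : ∀ x' y', x' ⊆ y' → ρ x' ⊆ ρ y')
    (lift_up : ∀ x' ∈ Xt.cells, ∀ y ∈ X.cells, ρ x' ⊆ y →
      ∃ y' ∈ Xt.cells, x' ⊆ y' ∧ ρ y' = y)
    (lift_down : ∀ x' ∈ Xt.cells, ∀ y ∈ X.cells, y ⊆ ρ x' →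
      ∃ y' ∈ Xt.cells, y' ⊆ x' ∧ ρ y' = y)
    (inj : ∀ x' ∈ Xt.cells, Set.InjOn ρ (Xt.near x')) :
    IsCovering Xt X ρ :=
  ⟨mem, surj, rank, fun x' hx' N => ⟨mapsTo_nbhd_of_mono mem rank mono x' N,
    (inj x' hx').mono (Xt.nbhd_subset_near x' N),
    surjOn_nbhd_of_lift rank lift_up lift_down hx' N⟩⟩

end CoveringCriterion

section Segment

variable {R R' : Type*} [CommRing R] [CommRing R']

lemma add_one_ne_self (h2 : (2 : R) ≠ 0) (a : R) : a + 1 ≠ a :=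
  add_ne_left.mpr fun h => h2 (by rw [← one_add_one_eq_two, h, add_zero])

lemma map_sub_one_of_map_add_one {f : R → R'} (hf : ∀ x, f (x + 1) = f x + 1) (x : R) :
    f (x - 1) = f x - 1 := by
  rw [eq_sub_iff_add_eq, ← hf, sub_add_cancel]

lemma eq_of_map_eq_of_near {f : R → R'} (hf : ∀ x, f (x + 1) = f x + 1) (h2 : (2 : R') ≠ 0)
    {a b b' : R} (hb : b = a - 1 ∨ b = a ∨ b = a + 1)
    (hb' : b' = a - 1 ∨ b' = a ∨ b' = a + 1) (h : f b = f b') : b = b' := by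
  have h1 := add_one_ne_self h2
  rcases hb with rfl | rfl | rfl <;> rcases hb' with rfl | rfl | rfl <;>
    simp only [map_sub_one_of_map_add_one hf, hf] at h <;> grind

variable [DecidableEq R] [DecidableEq R']

def seg (a : R) (b : Bool) : Finset R := if b then {a, a + 1} else {a}

lemma mem_seg {a x : R} {b : Bool} : x ∈ seg a b ↔ x = a ∨ (b = true ∧ x = a + 1) := by
  cases b <;> simp [seg]

lemma self_mem_seg (a : R) (b : Bool) : a ∈ seg a b := mem_seg.mpr (Or.inl rfl)

lemma seg_nonempty (a : R) (b : Bool) : (seg a b).Nonempty := ⟨a, self_mem_seg a b⟩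

lemma seg_subset_seg {a c : R} {b d : Bool}
    (h : (a = c ∧ (b = true → d = true)) ∨ (a = c + 1 ∧ b = false ∧ d = true)) :
    seg a b ⊆ seg c d := by
  rcases h with ⟨rfl, h⟩ | ⟨rfl, rfl, rfl⟩
  · cases b <;> cases d <;> simp_all [seg]
  · simp [seg]

lemma seg_subset_seg_iff (h2 : (2 : R) ≠ 0) {a c : R} {b d : Bool} :
    seg a b ⊆ seg c d ↔
      (a = c ∧ (b = true → d = true)) ∨ (a = c + 1 ∧ b = false ∧ d = true) := by
  have h1 := add_one_ne_self h2
  cases b <;> cases d <;> simp only [seg, Finset.insert_subset_iff, Finset.singleton_subset_iff,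
    Finset.mem_insert, Finset.mem_singleton, Bool.false_eq_true, Bool.true_eq_false, if_true,
    if_false] <;> grind

lemma seg_inj (h2 : (2 : R) ≠ 0) {a c : R} {b d : Bool} :
    seg a b = seg c d ↔ a = c ∧ b = d := by
  refine ⟨fun h => ?_, fun ⟨rfl, rfl⟩ => rfl⟩
  have := (seg_subset_seg_iff h2).mp h.le
  have := (seg_subset_seg_iff h2).mp h.ge
  have := add_one_ne_self h2
  cases b <;> cases d <;> grind

lemma seg_image {f : R → R'} (hf : ∀ x, f (x + 1) = f x + 1) (a : R) (b : Bool) :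
    (seg a b).image f = seg (f a) b := by
  cases b <;> simp [seg, Finset.image_insert, hf]

lemma near_of_mem_seg {a b c : R} {n n' : Bool} (ha : a ∈ seg c n) (hb : b ∈ seg c n') :
    b = a - 1 ∨ b = a ∨ b = a + 1 := by
  rw [mem_seg] at ha hb
  grind

lemma near_of_mem_seg_inter {a b c : R} {k m : Bool} (ha : c ∈ seg a k) (hb : c ∈ seg b m) :
    b = a - 1 ∨ b = a ∨ b = a + 1 := by
  rw [mem_seg] at ha hb
  grind

variable {f : R → R'} (hf : ∀ x, f (x + 1) = f x + 1) (h2 : (2 : R') ≠ 0)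
include hf h2

lemma exists_lift_seg_superset {x : R} {y : R'} {k m : Bool} (h : seg (f x) k ⊆ seg y m) :
    ∃ x', f x' = y ∧ seg x k ⊆ seg x' m := by
  rcases (seg_subset_seg_iff h2).mp h with ⟨hxy, hkm⟩ | ⟨hxy, hk, hm⟩
  · exact ⟨x, hxy, seg_subset_seg (Or.inl ⟨rfl, hkm⟩)⟩
  · refine ⟨x - 1, ?_, seg_subset_seg (Or.inr ⟨by ring, hk, hm⟩)⟩
    rw [map_sub_one_of_map_add_one hf, hxy, add_sub_cancel_right]

lemma exists_lift_seg_subset {x : R} {y : R'} {k m : Bool} (h : seg y m ⊆ seg (f x) k) :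
    ∃ x', f x' = y ∧ seg x' m ⊆ seg x k := by
  rcases (seg_subset_seg_iff h2).mp h with ⟨hxy, hkm⟩ | ⟨hxy, hk, hm⟩
  · exact ⟨x, hxy.symm, seg_subset_seg (Or.inl ⟨rfl, hkm⟩)⟩
  · exact ⟨x + 1, (hf x).trans hxy.symm, seg_subset_seg (Or.inr ⟨rfl, hk, hm⟩)⟩

end Segment

section Torus

variable {ℓ : ℕ} {p q : Fin ℓ → ℕ} {D : Type*} {ℓ' : ℕ}

lemma torusCell_eq_piFinset (s : ∀ i, ZMod (p i)) (k : Fin ℓ → Bool) :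
    torusCell p s k = Fintype.piFinset fun i => seg (s i) (k i) := by
  ext a
  simp only [torusCell, Finset.mem_image, Finset.mem_filter, Finset.mem_univ, true_and,
    Fintype.mem_piFinset, mem_seg]
  constructor
  · rintro ⟨k', hk', rfl⟩ i
    by_cases h : k' i = true
    · simp [h, hk' i h]
    · simp [h]
  · intro h
    refine ⟨fun i => decide (a i ≠ s i), fun i hi => ?_, funext fun i => ?_⟩
    · grind
    · by_cases ha : a i = s i
      · simp [ha]
      · grind

lemma torusCell_subset_torusCell_iff {s v : ∀ i, ZMod (p i)} {k n : Fin ℓ → Bool} :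
    torusCell p s k ⊆ torusCell p v n ↔ ∀ i, seg (s i) (k i) ⊆ seg (v i) (n i) := by
  rw [torusCell_eq_piFinset, torusCell_eq_piFinset, ← Finset.coe_subset, Fintype.coe_piFinset,
    Fintype.coe_piFinset, Set.univ_pi_subset_univ_pi_iff]
  simp [(seg_nonempty _ _).ne_empty]

-- `(2 : ZMod n) ≠ 0` holds exactly for `n = 0` and `n ≥ 3`, so hypotheses of this form cover the
-- tori of the theorem as well as the lattice `ℤ^ℓ`; over `ZMod 2` a cell `{a, a + 1}` does not
-- determine its base point `a`.
lemma torusCell_inj (hp : ∀ i, (2 : ZMod (p i)) ≠ 0) {s v : ∀ i, ZMod (p i)}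
    {k n : Fin ℓ → Bool} : torusCell p s k = torusCell p v n ↔ s = v ∧ k = n := by
  refine ⟨fun h => ?_, fun ⟨rfl, rfl⟩ => rfl⟩
  have hseg i : seg (s i) (k i) = seg (v i) (n i) :=
    (torusCell_subset_torusCell_iff.mp h.le i).antisymm (torusCell_subset_torusCell_iff.mp h.ge i)
  exact ⟨funext fun i => ((seg_inj (hp i)).mp (hseg i)).1,
    funext fun i => ((seg_inj (hp i)).mp (hseg i)).2⟩

lemma rk_torusCell (hp : ∀ i, (2 : ZMod (p i)) ≠ 0) (s : ∀ i, ZMod (p i))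
    (k : Fin ℓ → Bool) :
    (torusPre p).rk (torusCell p s k) = torusRank k := by
  show sInf _ = _
  have : {r | ∃ s' k', torusCell p s k = torusCell p s' k' ∧ r = torusRank k'} =
      {torusRank k} := by
    ext r
    simp only [torusCell_inj hp, Set.mem_singleton_iff]
    constructor
    · rintro ⟨s', k', ⟨-, rfl⟩, rfl⟩
      rfl
    · rintro rfl
      exact ⟨s, k, ⟨rfl, rfl⟩, rfl⟩
  rw [this, csInf_singleton]

lemma torusCell_mem_skel_iff (hp : ∀ i, (2 : ZMod (p i)) ≠ 0) {s : ∀ i, ZMod (p i)}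
    {k : Fin ℓ → Bool} {r : ℕ} :
    torusCell p s k ∈ (torusPre p).skel r ↔ torusRank k = r := by
  change torusCell p s k ∈ (torusPre p).cells ∧ (torusPre p).rk (torusCell p s k) = r ↔ _
  rw [rk_torusCell hp]
  exact and_iff_right ⟨s, k, rfl⟩

lemma torusRank_eq_zero_iff {k : Fin ℓ → Bool} : torusRank k = 0 ↔ k = fun _ => false := by
  simp [torusRank, Finset.filter_eq_empty_iff, funext_iff]

lemma torusRank_eq_one_iff {k : Fin ℓ → Bool} :
    torusRank k = 1 ↔ ∃ j, k = fun i => decide (i = j) := by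
  simp only [torusRank, Finset.card_eq_one, Finset.ext_iff, Finset.mem_filter, Finset.mem_univ,
    true_and, Finset.mem_singleton, funext_iff]
  refine exists_congr fun j => forall_congr' fun i => ?_
  cases k i <;> simp

lemma torusCell_false (s : ∀ i, ZMod (p i)) : torusCell p s (fun _ => false) = {s} := by
  simp [torusCell_eq_piFinset, seg]

lemma mem_torusCell_single {s a : ∀ i, ZMod (p i)} {j : Fin ℓ} :
    a ∈ torusCell p s (fun i => decide (i = j)) ↔
      a = s ∨ a = Function.update s j (s j + 1) := by
  simp only [torusCell_eq_piFinset, Fintype.mem_piFinset, mem_seg, decide_eq_true_eq, funext_iff]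
  grind [Function.update_apply]

lemma mem_torusPre_skel_iff (hp : ∀ i, (2 : ZMod (p i)) ≠ 0) {x : Finset (∀ i, ZMod (p i))}
    {r : ℕ} : x ∈ (torusPre p).skel r ↔ ∃ s k, x = torusCell p s k ∧ torusRank k = r := by
  constructor
  · rintro ⟨⟨s, k, rfl⟩, hr⟩
    exact ⟨s, k, rfl, (torusCell_mem_skel_iff hp).mp ⟨⟨s, k, rfl⟩, hr⟩⟩
  · rintro ⟨s, k, rfl, hr⟩
    exact (torusCell_mem_skel_iff hp).mpr hr

lemma mem_torusPre_skel_zero_iff (hp : ∀ i, (2 : ZMod (p i)) ≠ 0)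
    {x : Finset (∀ i, ZMod (p i))} : x ∈ (torusPre p).skel 0 ↔ ∃ s, x = {s} := by
  simp [mem_torusPre_skel_iff hp, torusRank_eq_zero_iff, torusCell_false]

def torusProj (hpq : ∀ i, p i ∣ q i) (a : ∀ i, ZMod (p i)) (z : ∀ i, ZMod (q i)) :
    ∀ i, ZMod (p i) :=
  fun i => ZMod.castHom (hpq i) (ZMod (p i)) (z i) + a i

lemma castHom_add_add_one (hpq : ∀ i, p i ∣ q i) (a : ∀ i, ZMod (p i)) (i : Fin ℓ)
    (x : ZMod (q i)) : ZMod.castHom (hpq i) (ZMod (p i)) (x + 1) + a i =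
      ZMod.castHom (hpq i) (ZMod (p i)) x + a i + 1 := by
  rw [map_add, map_one]
  ring

lemma image_torusCell_torusProj (hpq : ∀ i, p i ∣ q i) (a : ∀ i, ZMod (p i))
    (z : ∀ i, ZMod (q i)) (k : Fin ℓ → Bool) :
    (torusCell q z k).image (torusProj hpq a) = torusCell p (torusProj hpq a z) k := by
  rw [torusCell_eq_piFinset, torusCell_eq_piFinset]
  refine (Fintype.piFinset_image (fun i x => ZMod.castHom (hpq i) (ZMod (p i)) x + a i)
    _).symm.trans ?_
  exact congrArg _ (funext fun i => seg_image (castHom_add_add_one hpq a i) _ _)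

lemma near_of_mem_near_torusCell {b c : ∀ i, ZMod (q i)} {k m : Fin ℓ → Bool}
    (h : torusCell q c m ∈ (torusPre q).near (torusCell q b k)) (i : Fin ℓ) :
    c i = b i - 1 ∨ c i = b i ∨ c i = b i + 1 := by
  obtain ⟨-, _, ⟨w, n, rfl⟩, ⟨hb, hc⟩ | ⟨hb, hc⟩⟩ := h <;>
    rw [torusCell_subset_torusCell_iff] at hb hc
  · exact near_of_mem_seg (hb i (self_mem_seg _ _)) (hc i (self_mem_seg _ _))
  · exact near_of_mem_seg_inter (hb i (self_mem_seg _ _)) (hc i (self_mem_seg _ _))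

theorem isCovering_torusProj (hpq : ∀ i, p i ∣ q i) (hp : ∀ i, (2 : ZMod (p i)) ≠ 0)
    (a : ∀ i, ZMod (p i)) :
    IsCovering (torusPre q) (torusPre p) (Finset.image (torusProj hpq a)) := by
  have hq i : (2 : ZMod (q i)) ≠ 0 := fun h => hp i <| by
    simpa only [map_ofNat, map_zero] using congrArg (ZMod.castHom (hpq i) (ZMod (p i))) h
  set f : ∀ i, ZMod (q i) → ZMod (p i) := fun i x => ZMod.castHom (hpq i) (ZMod (p i)) x + a i
  have hf : ∀ i x, f i (x + 1) = f i x + 1 := castHom_add_add_one hpq a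
  refine isCovering_of_lift ?mem ?surj ?rank (fun _ _ => Finset.image_subset_image) ?up ?down ?inj
  case mem =>
    rintro _ ⟨z, k, rfl⟩
    exact ⟨_, k, image_torusCell_torusProj hpq a z k⟩
  case surj =>
    rintro _ ⟨v, k, rfl⟩
    choose z hz using fun i => ZMod.castHom_surjective (hpq i) (v i - a i)
    refine ⟨_, ⟨z, k, rfl⟩, ?_⟩
    rw [image_torusCell_torusProj]
    congr
    funext i
    simp [torusProj, hz]
  case rank =>
    rintro _ ⟨z, k, rfl⟩
    rw [image_torusCell_torusProj, rk_torusCell hp, rk_torusCell hq]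
  case up =>
    rintro _ ⟨z, k, rfl⟩ _ ⟨v, m, rfl⟩ h
    rw [image_torusCell_torusProj, torusCell_subset_torusCell_iff] at h
    choose z' hz' hsub using fun i => exists_lift_seg_superset (f := f i) (hf i) (hp i) (h i)
    exact ⟨_, ⟨z', m, rfl⟩, torusCell_subset_torusCell_iff.mpr hsub,
      by rw [image_torusCell_torusProj]; exact congrArg (torusCell p · m) (funext hz')⟩
  case down =>
    rintro _ ⟨z, k, rfl⟩ _ ⟨v, m, rfl⟩ h
    rw [image_torusCell_torusProj, torusCell_subset_torusCell_iff] at h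
    choose z' hz' hsub using fun i => exists_lift_seg_subset (f := f i) (hf i) (hp i) (h i)
    exact ⟨_, ⟨z', m, rfl⟩, torusCell_subset_torusCell_iff.mpr hsub,
      by rw [image_torusCell_torusProj]; exact congrArg (torusCell p · m) (funext hz')⟩
  case inj =>
    rintro _ ⟨b, k, rfl⟩ y₁ h₁ y₂ h₂ h
    obtain ⟨⟨b₁, m₁, rfl⟩, -⟩ := id h₁
    obtain ⟨⟨b₂, m₂, rfl⟩, -⟩ := id h₂
    rw [image_torusCell_torusProj, image_torusCell_torusProj, torusCell_inj hp] at h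
    rw [h.2]
    congr
    funext i
    exact eq_of_map_eq_of_near (f := f i) (hf i) (hp i) (near_of_mem_near_torusCell h₁ i)
      (near_of_mem_near_torusCell h₂ i) (congrFun h.1 i)

lemma feat_torusCell (hp : ∀ i, (2 : ZMod (p i)) ≠ 0) (M : HOMP D ℓ') (t : ℕ)
    (s : ∀ i, ZMod (p i)) (k : Fin ℓ → Bool) :
    M.feat (torusPre p) t (torusCell p s k) = M.feat (torusPre 0) t (torusCell 0 0 k) := by
  have hcov := isCovering_torusProj (q := 0) (fun i => dvd_zero (p i)) hp s
  rw [← hcov.feat_eq M t ⟨0, k, rfl⟩, image_torusCell_torusProj]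
  congr
  funext i
  simp [torusProj]

lemma cells_torusPre : (torusPre p).cells =
    Set.range fun c : (Fin ℓ → Bool) × (∀ i, ZMod (p i)) => torusCell p c.2 c.1 := by
  ext x
  exact ⟨fun ⟨s, k, hx⟩ => ⟨(k, s), hx.symm⟩, fun ⟨c, hx⟩ => ⟨c.2, c.1, hx.symm⟩⟩

lemma out_torusPre [∀ i, NeZero (p i)] (hp : ∀ i, (2 : ZMod (p i)) ≠ 0) (M : HOMP D ℓ') :
    M.out (torusPre p) = M.readout (Finset.univ.val.map
      fun c : (Fin ℓ → Bool) × (∀ i, ZMod (p i)) =>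
        M.feat (torusPre 0) M.T (torusCell 0 0 c.1)) := by
  have hinj : Set.InjOn (fun c : (Fin ℓ → Bool) × (∀ i, ZMod (p i)) => torusCell p c.2 c.1)
      Set.univ := fun c _ c' _ h => by
    obtain ⟨hs, hk⟩ := (torusCell_inj hp).mp h
    exact Prod.ext hk hs
  rw [HOMP.out, cells_torusPre, ← Set.image_univ, setMultiset_image hinj, setMultiset_univ,
    Multiset.map_map]
  exact congrArg _ (Multiset.map_congr rfl fun c _ => feat_torusCell hp M M.T c.2 c.1)

end Torus

theorem out_torusPre_eq_of_prod_eq {ℓ : ℕ} {p p' : Fin ℓ → ℕ} (hp : ∀ i, 3 ≤ p i)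
    (hp' : ∀ i, 3 ≤ p' i) (hcard : ∏ i, p i = ∏ i, p' i) {D : Type*} {ℓ' : ℕ}
    (M : HOMP D ℓ') :
    M.out (torusPre p) = M.out (torusPre p') := by
  have : ∀ i, NeZero (p i) := fun i => ⟨by have := hp i; omega⟩
  have : ∀ i, NeZero (p' i) := fun i => ⟨by have := hp' i; omega⟩
  let e : (∀ i, ZMod (p i)) ≃ ∀ i, ZMod (p' i) :=
    Fintype.equivOfCardEq (by simpa [Fintype.card_pi] using hcard)
  rw [out_torusPre (fun i => ZMod.two_ne_zero_of_three_le (hp i)),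
    out_torusPre (fun i => ZMod.two_ne_zero_of_three_le (hp' i)),
    ← Multiset.map_univ_val_equiv ((Equiv.refl _).prodCongr e), Multiset.map_map]
  rfl

section TorusGraph

variable {ℓ : ℕ} {p : Fin ℓ → ℕ}

def torusGraph (p : Fin ℓ → ℕ) : SimpleGraph (∀ i, ZMod (p i)) :=
  SimpleGraph.fromRel fun a b => ∃ j, b = Function.update a j (a j + 1)

def torusDist (p : Fin ℓ → ℕ) (a b : ∀ i, ZMod (p i)) : ℕ :=
  ∑ i, (a i - b i).valMinAbs.natAbs

lemma torusDist_eq_zero_iff {a b : ∀ i, ZMod (p i)} : torusDist p a b = 0 ↔ a = b := by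
  simp [torusDist, Finset.sum_eq_zero_iff, ZMod.valMinAbs_eq_zero, sub_eq_zero, funext_iff]

lemma torusDist_update_add (a b : ∀ i, ZMod (p i)) (j : Fin ℓ) (y : ZMod (p j)) :
    torusDist p (Function.update a j y) b + (a j - b j).valMinAbs.natAbs =
      torusDist p a b + (y - b j).valMinAbs.natAbs := by
  simp only [torusDist, ← Finset.add_sum_erase _ _ (Finset.mem_univ j), Function.update_self]
  rw [Finset.sum_congr rfl fun i hi => by rw [Function.update_of_ne (Finset.ne_of_mem_erase hi)]]
  ring

lemma torusDist_update_add_le (a b : ∀ i, ZMod (p i)) (j : Fin ℓ) {e : ZMod (p j)}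
    (he : e.valMinAbs.natAbs ≤ 1) :
    torusDist p (Function.update a j (a j + e)) b ≤ torusDist p a b + 1 := by
  have h1 := torusDist_update_add a b j (a j + e)
  have h2 := ZMod.natAbs_valMinAbs_add_le_add (a j - b j) e
  rw [show a j + e - b j = a j - b j + e by ring] at h1
  omega

lemma torusDist_le_of_adj {u v : ∀ i, ZMod (p i)} (h : (torusGraph p).Adj u v)
    (b : ∀ i, ZMod (p i)) : torusDist p u b ≤ torusDist p v b + 1 := by
  obtain ⟨-, ⟨j, rfl⟩ | ⟨j, rfl⟩⟩ := (SimpleGraph.fromRel_adj _ _ _).mp h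
  · simpa using torusDist_update_add_le (Function.update u j (u j + 1)) b j
      ZMod.natAbs_valMinAbs_neg_one_le
  · exact torusDist_update_add_le v b j ZMod.natAbs_valMinAbs_one_le

lemma exists_adj_torusDist_add_one [∀ i, NeZero (p i)] {a b : ∀ i, ZMod (p i)} (hab : a ≠ b) :
    ∃ a', (torusGraph p).Adj a a' ∧ torusDist p a' b + 1 = torusDist p a b := by
  obtain ⟨j, hj⟩ := Function.ne_iff.mp hab
  obtain ⟨e, he, hdesc⟩ := ZMod.exists_natAbs_valMinAbs_add_add_one (sub_ne_zero.mpr hj)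
  have hdist := torusDist_update_add a b j (a j + e)
  rw [show a j + e - b j = a j - b j + e by ring] at hdist
  refine ⟨Function.update a j (a j + e), ?_, by omega⟩
  refine (SimpleGraph.fromRel_adj _ _ _).mpr ⟨fun h => ?_, ?_⟩
  · rw [← h] at hdist
    omega
  · rcases he with rfl | rfl
    · exact Or.inl ⟨j, rfl⟩
    · exact Or.inr ⟨j, by simp⟩

lemma edist_torusGraph [∀ i, NeZero (p i)] (a b : ∀ i, ZMod (p i)) :
    (torusGraph p).edist a b = torusDist p a b :=
  SimpleGraph.edist_eq_of_lipschitz_of_descent (torusDist p · b) (fun _ => torusDist_eq_zero_iff)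
    (fun _ _ h => torusDist_le_of_adj h b) (fun _ h => exists_adj_torusDist_add_one h) a

lemma ediam_torusGraph [∀ i, NeZero (p i)] : (torusGraph p).ediam = ∑ i, p i / 2 := by
  refine le_antisymm (SimpleGraph.ediam_le_of_edist_le fun a b => ?_) ?_
  · rw [edist_torusGraph]
    exact_mod_cast Finset.sum_le_sum fun i _ => ZMod.natAbs_valMinAbs_le _
  · have : torusDist p (fun i => ((p i / 2 : ℕ) : ZMod (p i))) 0 = ∑ i, p i / 2 := by
      simp only [torusDist, Pi.zero_apply, sub_zero, ZMod.valMinAbs_natCast_of_le_half le_rfl,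
        Int.natAbs_natCast]
    rw [← this, ← edist_torusGraph]
    exact SimpleGraph.edist_le_ediam

lemma zeroGraph_adj_iff (hp : ∀ i, (2 : ZMod (p i)) ≠ 0) {a b : ∀ i, ZMod (p i)}
    (ha : {a} ∈ (torusPre p).skel 0) (hb : {b} ∈ (torusPre p).skel 0) :
    (zeroGraph (torusPre p)).Adj ⟨{a}, ha⟩ ⟨{b}, hb⟩ ↔ (torusGraph p).Adj a b := by
  simp only [zeroGraph, torusGraph, SimpleGraph.fromRel_adj, ne_eq, Subtype.mk.injEq,
    Finset.singleton_inj, Finset.singleton_subset_iff, mem_torusPre_skel_iff hp,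
    torusRank_eq_one_iff]
  refine and_congr_right fun hab => ⟨?_, ?_⟩
  · rintro ⟨_, ⟨s, _, rfl, j, rfl⟩, ha, hb⟩
    rw [mem_torusCell_single] at ha hb
    rcases ha with rfl | rfl <;> rcases hb with rfl | rfl
    · exact absurd rfl hab
    · exact Or.inl ⟨j, rfl⟩
    · exact Or.inr ⟨j, rfl⟩
    · exact absurd rfl hab
  · rintro (⟨j, rfl⟩ | ⟨j, rfl⟩)
    · exact ⟨_, ⟨a, _, rfl, j, rfl⟩, mem_torusCell_single.mpr (Or.inl rfl),
        mem_torusCell_single.mpr (Or.inr rfl)⟩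
    · exact ⟨_, ⟨b, _, rfl, j, rfl⟩, mem_torusCell_single.mpr (Or.inr rfl),
        mem_torusCell_single.mpr (Or.inl rfl)⟩

noncomputable def zeroGraphIso (hp : ∀ i, (2 : ZMod (p i)) ≠ 0) :
    torusGraph p ≃g zeroGraph (torusPre p) where
  toEquiv := Equiv.ofBijective (fun a => ⟨{a}, (mem_torusPre_skel_zero_iff hp).mpr ⟨a, rfl⟩⟩)
    ⟨fun a b h => Finset.singleton_injective (congrArg Subtype.val h),
     fun ⟨x, hx⟩ => by
      obtain ⟨s, rfl⟩ := (mem_torusPre_skel_zero_iff hp).mp hx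
      exact ⟨s, rfl⟩⟩
  map_rel_iff' := zeroGraph_adj_iff hp _ _

theorem diam_zeroGraph_torusPre (hp : ∀ i, 3 ≤ p i) :
    (zeroGraph (torusPre p)).diam = ∑ i, p i / 2 := by
  have : ∀ i, NeZero (p i) := fun i => ⟨by have := hp i; omega⟩
  rw [SimpleGraph.diam, (zeroGraphIso fun i => ZMod.two_ne_zero_of_three_le (hp i)).ediam_eq,
    ediam_torusGraph, ENat.toNat_natCast]

end TorusGraph

/-- Tori satisfying `p₁⋯p_ℓ = p'₁⋯p'_ℓ`, all `p_j, p'_j ≥ 3`, and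
`Σ ⌊p_j/2⌋ ≠ Σ ⌊p'_j/2⌋` have different `𝒜₍₀,₁₎`-diameters, yet every HOMP model
assigns them the same output. -/
theorem torus_diff_diam_homp_indistinguishable {ℓ : ℕ} (p p' : Fin ℓ → ℕ)
    (hcard : ∏ i, p i = ∏ i, p' i)
    (hp : ∀ j, 3 ≤ p j) (hp' : ∀ j, 3 ≤ p' j)
    (hdiam : ∑ j, p j / 2 ≠ ∑ j, p' j / 2) :
    (zeroGraph (torusPre p)).diam ≠ (zeroGraph (torusPre p')).diam ∧
    ∀ {D : Type} {ℓ' : ℕ} (M : HOMP D ℓ'),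
      M.out (torusPre p) = M.out (torusPre p') := by
  refine ⟨?_, fun M => out_torusPre_eq_of_prod_eq hp hp' hcard M⟩
  rwa [diam_zeroGraph_torusPre hp, diam_zeroGraph_torusPre hp']

end TDL
end

section
/- For integers h, p ≥ 3, the boundary graph ∂Cyl_{h,p} of the cylinder CC — whose vertices are the nodes contained in some boundary 1-cell and whose edges are the boundary 1-cells — is isomorphic to the disjoint union of two cycle graphs, each of length p. -/
namespace TDL

/-- The residue of `n` modulo `p` taken in `{1, …, p}`. -/
def residue (p n : ℕ) : ℕ := (n - 1) % p + 1

/-- The node map `ρ_cyl^{h,p}(s₁, s₂) = (s₁, s₂ mod p)`, residues in `{1,…,p}`. -/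
def rhoCyl (p : ℕ) (s : ℕ × ℕ) : ℕ × ℕ := (s.1, residue p s.2)

/-- The node map `ρ_möb^{h,p}`: `(s₁, s₂ mod p)` if `s₂ mod 2p ≤ p`, and
`(h + 1 − s₁, s₂ mod p)` otherwise, residues taken in `{1,…,p}` and `{1,…,2p}`. -/
def rhoMob (h p : ℕ) (s : ℕ × ℕ) : ℕ × ℕ :=
  if residue (2 * p) s.2 ≤ p then (s.1, residue p s.2) else (h + 1 - s.1, residue p s.2)

/-- The node set `[h] × [p]`. -/
def gridNodes (h p : ℕ) : Set (ℕ × ℕ) :=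
  {s | 1 ≤ s.1 ∧ s.1 ≤ h ∧ 1 ≤ s.2 ∧ s.2 ≤ p}

/-- Coordinatewise addition of `k ∈ {0,1}²` to a node. -/
def addK (s : ℕ × ℕ) (k : Bool × Bool) : ℕ × ℕ :=
  (s.1 + (if k.1 then 1 else 0), s.2 + (if k.2 then 1 else 0))

/-- The cell `s_k = { ρ(s + k') : k' ∈ {0,1}², k' ≤ k }`. -/
def stripCell (ρ : ℕ × ℕ → ℕ × ℕ) (s : ℕ × ℕ) (k : Bool × Bool) : Finset (ℕ × ℕ) :=
  (Finset.univ.filter fun k' : Bool × Bool => k'.1 ≤ k.1 ∧ k'.2 ≤ k.2).image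
    fun k' => ρ (addK s k')

/-- The rank `k₁ + k₂` of the cell `s_k`. -/
def stripRank (k : Bool × Bool) : ℕ :=
  (if k.1 then 1 else 0) + (if k.2 then 1 else 0)

/-- The complex with node set `[h] × [p]` glued via the node map `ρ`: for
`r ∈ {0,1,2}` its `r`-cells are the sets `s_k` with `s ∈ [h] × [p]`,
`k ∈ {0,1}²`, `k₁ + k₂ = r` and `ρ(s + k) ∈ [h] × [p]`. -/
noncomputable def stripPre (h p : ℕ) (ρ : ℕ × ℕ → ℕ × ℕ) : PreCC (ℕ × ℕ) where
  cells := {x | ∃ s ∈ gridNodes h p, ∃ k : Bool × Bool,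
    ρ (addK s k) ∈ gridNodes h p ∧ x = stripCell ρ s k}
  rk x := sInf {r | ∃ s ∈ gridNodes h p, ∃ k : Bool × Bool,
    ρ (addK s k) ∈ gridNodes h p ∧ x = stripCell ρ s k ∧ r = stripRank k}

/-- The cylinder combinatorial complex `Cyl_{h,p}`. -/
noncomputable def cylPre (h p : ℕ) : PreCC (ℕ × ℕ) := stripPre h p (rhoCyl p)

/-- The Möbius strip combinatorial complex `Möb_{h,p}`. -/
noncomputable def mobPre (h p : ℕ) : PreCC (ℕ × ℕ) := stripPre h p (rhoMob h p)

end TDL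

namespace TDL

/-- A boundary edge: a `1`-cell contained in exactly one `2`-cell. -/
def IsBoundaryEdge {S : Type*} (X : PreCC S) (x : Finset S) : Prop :=
  x ∈ X.skel 1 ∧ {y | y ∈ X.skel 2 ∧ x ⊆ y}.ncard = 1

/-- The boundary graph `∂X`: vertices are the nodes contained in some boundary
edge, and two distinct vertices are joined iff some boundary edge contains both. -/
def boundaryGraph {S : Type*} (X : PreCC S) :
    SimpleGraph {v : S // ∃ x, IsBoundaryEdge X x ∧ v ∈ x} where
  Adj u v := u ≠ v ∧ ∃ x, IsBoundaryEdge X x ∧ u.1 ∈ x ∧ v.1 ∈ x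
  symm := ⟨by
    rintro u v ⟨hne, x, hx, hu, hv⟩
    exact ⟨hne.symm, x, hx, hv, hu⟩⟩
  loopless := ⟨by rintro u ⟨hne, -⟩; exact hne rfl⟩

/-- The disjoint union of two simple graphs. -/
def graphSum {V W : Type*} (G : SimpleGraph V) (H : SimpleGraph W) :
    SimpleGraph (V ⊕ W) where
  Adj x y := Sum.LiftRel G.Adj H.Adj x y
  symm := ⟨by
    rintro x y (h | h)
    · exact Sum.LiftRel.inl (G.adj_symm h)
    · exact Sum.LiftRel.inr (H.adj_symm h)⟩
  loopless := ⟨by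
    rintro x (h | h)
    · exact G.irrefl h
    · exact H.irrefl h⟩

end TDL

namespace TDL

/-! A cell `s_k` of `Cyl_{h,p}` has exactly `2 ^ (k₁ + k₂)` nodes once `p ≥ 2`, so its rank is
read off from its size. The 1-cells are then the axial edges `{(a, b), (a + 1, b)}` and the
circle edges `{(a, b), (a, b + 1 mod p)}`, and the 2-cells are the unit squares. For `p ≥ 3`
an axial edge lies in the two distinct squares on either side of it, and a circle edge at
height `a` lies in the squares at heights `a - 1` and `a` that exist. Hence the boundary edges
are exactly the circle edges at heights `1` and `h`, and reducing the angle `b` modulo `p`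
identifies each of these two circles with the cycle on `ZMod p`. -/

section Residue

variable {p : ℕ}

lemma residue_pos (n : ℕ) : 1 ≤ residue p n := Nat.le_add_left 1 _

lemma residue_le (hp : 0 < p) (n : ℕ) : residue p n ≤ p := Nat.mod_lt _ hp

lemma residue_of_mem_Icc {n : ℕ} (h₁ : 1 ≤ n) (h₂ : n ≤ p) : residue p n = n := by
  rw [residue, Nat.mod_eq_of_lt (by omega)]
  omega

lemma residue_succ {b : ℕ} (h₁ : 1 ≤ b) (h₂ : b ≤ p) :
    residue p (b + 1) = if b < p then b + 1 else 1 := by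
  split_ifs with hb
  · exact residue_of_mem_Icc (by omega) hb
  · rw [residue, show b + 1 - 1 = p by omega, Nat.mod_self]

lemma residue_succ_ne (hp : 2 ≤ p) {b : ℕ} (h₁ : 1 ≤ b) (h₂ : b ≤ p) :
    residue p (b + 1) ≠ b := by
  rw [residue_succ h₁ h₂]
  split_ifs <;> omega

lemma exists_residue_succ_eq {b : ℕ} (h₁ : 1 ≤ b) (h₂ : b ≤ p) :
    ∃ b', 1 ≤ b' ∧ b' ≤ p ∧ residue p (b' + 1) = b := by
  rcases eq_or_ne b 1 with rfl | hb
  · exact ⟨p, h₂, le_rfl, by simp [residue_succ h₂ le_rfl]⟩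
  · exact ⟨b - 1, by omega, by omega, by rw [Nat.sub_add_cancel h₁, residue_of_mem_Icc h₁ h₂]⟩

lemma natCast_residue {n : ℕ} (hn : 1 ≤ n) : (residue p n : ZMod p) = n := by
  rw [residue, Nat.cast_add, ZMod.natCast_mod, Nat.cast_one, Nat.cast_pred hn, sub_add_cancel]

lemma natCast_injOn_Icc : Set.InjOn (Nat.cast : ℕ → ZMod p) (Set.Icc 1 p) := by
  rintro x ⟨hx₁, hx₂⟩ y ⟨hy₁, hy₂⟩ hxy
  have hpred : ((x - 1 : ℕ) : ZMod p) = ((y - 1 : ℕ) : ZMod p) := by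
    rw [Nat.cast_pred hx₁, Nat.cast_pred hy₁, hxy]
  rw [ZMod.natCast_eq_natCast_iff', Nat.mod_eq_of_lt (by omega),
    Nat.mod_eq_of_lt (by omega)] at hpred
  omega

lemma eq_residue_iff {n y : ℕ} (hn : 1 ≤ n) (hy₁ : 1 ≤ y) (hy₂ : y ≤ p) :
    y = residue p n ↔ (y : ZMod p) = n := by
  rw [← natCast_residue (p := p) hn]
  exact ⟨congrArg _, fun h => natCast_injOn_Icc ⟨hy₁, hy₂⟩
    ⟨residue_pos _, residue_le (by omega) _⟩ h⟩

lemma exists_natCast_eq [NeZero p] (i : ZMod p) : ∃ b, 1 ≤ b ∧ b ≤ p ∧ (b : ZMod p) = i :=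
  ⟨(i - 1).val + 1, Nat.le_add_left 1 _, ZMod.val_lt _, by push_cast [ZMod.natCast_zmod_val]; ring⟩

lemma cycGraph_adj_natCast_iff (hp : 2 ≤ p) {b c : ℕ} (hb₁ : 1 ≤ b) (hb₂ : b ≤ p)
    (hc₁ : 1 ≤ c) (hc₂ : c ≤ p) :
    (cycGraph p).Adj (b : ZMod p) c ↔ c = residue p (b + 1) ∨ b = residue p (c + 1) := by
  have : Fact (1 < p) := ⟨hp⟩
  rw [eq_residue_iff (Nat.le_add_left 1 b) hc₁ hc₂, eq_residue_iff (Nat.le_add_left 1 c) hb₁ hb₂]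
  push_cast
  simp only [cycGraph, sub_eq_iff_eq_add']
  rw [or_comm, and_iff_right_iff_imp]
  rintro (h | h) <;> simp [h]

end Residue

section StripComplex

variable {h p : ℕ} {ρ : ℕ × ℕ → ℕ × ℕ}

lemma card_stripCell {s : ℕ × ℕ} (hρ : Function.Injective fun k => ρ (addK s k))
    (k : Bool × Bool) : (stripCell ρ s k).card = 2 ^ stripRank k := by
  rw [stripCell, Finset.card_image_of_injective _ hρ]
  obtain ⟨_ | _, _ | _⟩ := k <;> rfl

lemma stripPre_rk (hρ : ∀ s ∈ gridNodes h p, Function.Injective fun k => ρ (addK s k))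
    {s : ℕ × ℕ} (hs : s ∈ gridNodes h p) {k : Bool × Bool}
    (hk : ρ (addK s k) ∈ gridNodes h p) :
    (stripPre h p ρ).rk (stripCell ρ s k) = stripRank k := by
  have hranks : {r | ∃ s' ∈ gridNodes h p, ∃ k' : Bool × Bool,
      ρ (addK s' k') ∈ gridNodes h p ∧ stripCell ρ s k = stripCell ρ s' k' ∧
        r = stripRank k'} = {stripRank k} := by
    ext r
    refine ⟨?_, fun hr => ⟨s, hs, k, hk, rfl, hr⟩⟩
    rintro ⟨s', hs', k', -, hcell, rfl⟩
    have hcard := congrArg Finset.card hcell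
    rw [card_stripCell (hρ s hs), card_stripCell (hρ s' hs')] at hcard
    exact (Nat.pow_right_injective le_rfl hcard).symm
  exact (congrArg sInf hranks).trans (csInf_singleton _)

lemma mem_skel_stripPre_iff
    (hρ : ∀ s ∈ gridNodes h p, Function.Injective fun k => ρ (addK s k))
    {x : Finset (ℕ × ℕ)} {r : ℕ} :
    x ∈ (stripPre h p ρ).skel r ↔ ∃ s ∈ gridNodes h p, ∃ k : Bool × Bool,
      ρ (addK s k) ∈ gridNodes h p ∧ x = stripCell ρ s k ∧ stripRank k = r := by
  constructor
  · rintro ⟨⟨s, hs, k, hk, rfl⟩, hr⟩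
    exact ⟨s, hs, k, hk, rfl, (stripPre_rk hρ hs hk).symm.trans hr⟩
  · rintro ⟨s, hs, k, hk, rfl, hr⟩
    exact ⟨⟨s, hs, k, hk, rfl⟩, (stripPre_rk hρ hs hk).trans hr⟩

lemma stripCell_true_false (ρ : ℕ × ℕ → ℕ × ℕ) (a b : ℕ) :
    stripCell ρ (a, b) (true, false) = {ρ (a, b), ρ (a + 1, b)} := by
  rw [stripCell, show (Finset.univ.filter fun k : Bool × Bool => k.1 ≤ true ∧ k.2 ≤ false)
    = {(false, false), (true, false)} by decide]
  simp [addK]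

lemma stripCell_false_true (ρ : ℕ × ℕ → ℕ × ℕ) (a b : ℕ) :
    stripCell ρ (a, b) (false, true) = {ρ (a, b), ρ (a, b + 1)} := by
  rw [stripCell, show (Finset.univ.filter fun k : Bool × Bool => k.1 ≤ false ∧ k.2 ≤ true)
    = {(false, false), (false, true)} by decide]
  simp [addK]

lemma stripCell_true_true (ρ : ℕ × ℕ → ℕ × ℕ) (a b : ℕ) :
    stripCell ρ (a, b) (true, true) =
      {ρ (a, b), ρ (a + 1, b), ρ (a, b + 1), ρ (a + 1, b + 1)} := by
  rw [stripCell, show (Finset.univ.filter fun k : Bool × Bool => k.1 ≤ true ∧ k.2 ≤ true)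
    = {(false, false), (true, false), (false, true), (true, true)} by decide]
  simp [addK]

end StripComplex

lemma not_isBoundaryEdge_of_ne {S : Type*} {X : PreCC S} {x y₁ y₂ : Finset S}
    (hy₁ : y₁ ∈ X.skel 2 ∧ x ⊆ y₁) (hy₂ : y₂ ∈ X.skel 2 ∧ x ⊆ y₂) (hne : y₁ ≠ y₂) :
    ¬IsBoundaryEdge X x := by
  rintro ⟨-, hcard⟩
  obtain ⟨y, hy⟩ := Set.ncard_eq_one.1 hcard
  have h₁ : y₁ ∈ ({y} : Set (Finset S)) := hy ▸ hy₁
  have h₂ : y₂ ∈ ({y} : Set (Finset S)) := hy ▸ hy₂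
  exact hne (h₁.trans h₂.symm)

namespace Cyl

variable {h p : ℕ}

/- Nodes are `(a, b)` with height `a ∈ [h]` and angle `b ∈ [p]`; the next angle after `b`
is `residue p (b + 1)`. -/
def circleEdge (p a b : ℕ) : Finset (ℕ × ℕ) := {(a, b), (a, residue p (b + 1))}

def axialEdge (a b : ℕ) : Finset (ℕ × ℕ) := {(a, b), (a + 1, b)}

def square (p a b : ℕ) : Finset (ℕ × ℕ) :=
  {(a, b), (a + 1, b), (a, residue p (b + 1)), (a + 1, residue p (b + 1))}

lemma rhoCyl_of_mem_Icc {a b : ℕ} (hb₁ : 1 ≤ b) (hb₂ : b ≤ p) : rhoCyl p (a, b) = (a, b) := by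
  rw [rhoCyl, residue_of_mem_Icc hb₁ hb₂]

lemma rhoCyl_mem_gridNodes_iff (hp : 0 < p) {s : ℕ × ℕ} :
    rhoCyl p s ∈ gridNodes h p ↔ 1 ≤ s.1 ∧ s.1 ≤ h := by
  simp [rhoCyl, gridNodes, residue_pos, residue_le hp]

lemma rhoCyl_addK_injective (hp : 2 ≤ p) {a b : ℕ} (hb₁ : 1 ≤ b) (hb₂ : b ≤ p) :
    Function.Injective fun k => rhoCyl p (addK (a, b) k) := by
  have hne := residue_succ_ne hp hb₁ hb₂
  have hself : residue p b = b := residue_of_mem_Icc hb₁ hb₂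
  rintro ⟨_ | _, _ | _⟩ ⟨_ | _, _ | _⟩ hk <;>
    simp only [rhoCyl, addK, Prod.mk.injEq, Bool.false_eq_true, ↓reduceIte, add_zero,
      hself] at hk <;>
    first | rfl | omega

lemma mem_skel_one_iff (hp : 2 ≤ p) {x : Finset (ℕ × ℕ)} :
    x ∈ (cylPre h p).skel 1 ↔ ∃ a b, 1 ≤ a ∧ 1 ≤ b ∧ b ≤ p ∧
      ((a + 1 ≤ h ∧ x = axialEdge a b) ∨ (a ≤ h ∧ x = circleEdge p a b)) := by
  rw [cylPre, mem_skel_stripPre_iff fun _ hs => rhoCyl_addK_injective hp hs.2.2.1 hs.2.2.2]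
  constructor
  · rintro ⟨⟨a, b⟩, ⟨ha₁, ha₂, hb₁, hb₂⟩, ⟨_ | _, _ | _⟩, hk, rfl, hr⟩ <;>
      simp only [stripRank, Bool.false_eq_true, ↓reduceIte] at hr <;> try omega
    · refine ⟨a, b, ha₁, hb₁, hb₂, Or.inr ⟨ha₂, ?_⟩⟩
      rw [stripCell_false_true, rhoCyl_of_mem_Icc hb₁ hb₂]
      rfl
    · refine ⟨a, b, ha₁, hb₁, hb₂, Or.inl ⟨((rhoCyl_mem_gridNodes_iff (by omega)).1 hk).2, ?_⟩⟩
      rw [stripCell_true_false, rhoCyl_of_mem_Icc hb₁ hb₂, rhoCyl_of_mem_Icc hb₁ hb₂]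
      rfl
  · rintro ⟨a, b, ha₁, hb₁, hb₂, ⟨ha₂, rfl⟩ | ⟨ha₂, rfl⟩⟩
    · refine ⟨(a, b), ⟨ha₁, by omega, hb₁, hb₂⟩, (true, false),
        (rhoCyl_mem_gridNodes_iff (s := (a + 1, b)) (by omega)).2 ⟨by omega, ha₂⟩, ?_, rfl⟩
      rw [stripCell_true_false, rhoCyl_of_mem_Icc hb₁ hb₂, rhoCyl_of_mem_Icc hb₁ hb₂]
      rfl
    · refine ⟨(a, b), ⟨ha₁, ha₂, hb₁, hb₂⟩, (false, true),
        (rhoCyl_mem_gridNodes_iff (s := (a, b + 1)) (by omega)).2 ⟨ha₁, ha₂⟩, ?_, rfl⟩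
      rw [stripCell_false_true, rhoCyl_of_mem_Icc hb₁ hb₂]
      rfl

lemma mem_skel_two_iff (hp : 2 ≤ p) {x : Finset (ℕ × ℕ)} :
    x ∈ (cylPre h p).skel 2 ↔
      ∃ a b, 1 ≤ a ∧ a + 1 ≤ h ∧ 1 ≤ b ∧ b ≤ p ∧ x = square p a b := by
  rw [cylPre, mem_skel_stripPre_iff fun _ hs => rhoCyl_addK_injective hp hs.2.2.1 hs.2.2.2]
  constructor
  · rintro ⟨⟨a, b⟩, ⟨ha₁, -, hb₁, hb₂⟩, ⟨_ | _, _ | _⟩, hk, rfl, hr⟩ <;>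
      simp only [stripRank, Bool.false_eq_true, ↓reduceIte] at hr <;> try omega
    refine ⟨a, b, ha₁, ((rhoCyl_mem_gridNodes_iff (by omega)).1 hk).2, hb₁, hb₂, ?_⟩
    rw [stripCell_true_true, rhoCyl_of_mem_Icc hb₁ hb₂, rhoCyl_of_mem_Icc hb₁ hb₂]
    rfl
  · rintro ⟨a, b, ha₁, ha₂, hb₁, hb₂, rfl⟩
    refine ⟨(a, b), ⟨ha₁, by omega, hb₁, hb₂⟩, (true, true),
      (rhoCyl_mem_gridNodes_iff (s := (a + 1, b + 1)) (by omega)).2 ⟨by omega, ha₂⟩, ?_, rfl⟩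
    rw [stripCell_true_true, rhoCyl_of_mem_Icc hb₁ hb₂, rhoCyl_of_mem_Icc hb₁ hb₂]
    rfl

lemma circleEdge_subset_square_iff (hp : 3 ≤ p) {a b a' b' : ℕ} (hb₁ : 1 ≤ b) (hb₂ : b ≤ p)
    (hb₁' : 1 ≤ b') (hb₂' : b' ≤ p) :
    circleEdge p a b ⊆ square p a' b' ↔ (a = a' ∨ a = a' + 1) ∧ b = b' := by
  constructor
  · intro hsub
    have hlo := hsub (by simp [circleEdge] : (a, b) ∈ circleEdge p a b)
    have hhi := hsub (by simp [circleEdge] : (a, residue p (b + 1)) ∈ circleEdge p a b)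
    simp only [square, Finset.mem_insert, Finset.mem_singleton, Prod.mk.injEq] at hlo hhi
    rw [residue_succ hb₁ hb₂, residue_succ hb₁' hb₂'] at *
    split_ifs at hlo hhi <;> omega
  · rintro ⟨rfl | rfl, rfl⟩ <;> simp [circleEdge, square, Finset.insert_subset_iff]

lemma square_inj (hp : 3 ≤ p) {a b a' b' : ℕ} (hb₁ : 1 ≤ b) (hb₂ : b ≤ p)
    (hb₁' : 1 ≤ b') (hb₂' : b' ≤ p) : square p a b = square p a' b' ↔ a = a' ∧ b = b' := by
  refine ⟨fun heq => ?_, fun ⟨ha, hb⟩ => ha ▸ hb ▸ rfl⟩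
  have hsub : circleEdge p a b ⊆ square p a b :=
    (circleEdge_subset_square_iff hp hb₁ hb₂ hb₁ hb₂).2 ⟨Or.inl rfl, rfl⟩
  have hsub' : circleEdge p a' b' ⊆ square p a' b' :=
    (circleEdge_subset_square_iff hp hb₁' hb₂' hb₁' hb₂').2 ⟨Or.inl rfl, rfl⟩
  rw [heq, circleEdge_subset_square_iff hp hb₁ hb₂ hb₁' hb₂'] at hsub
  rw [← heq, circleEdge_subset_square_iff hp hb₁' hb₂' hb₁ hb₂] at hsub'
  omega

lemma cofaces_circleEdge (hp : 3 ≤ p) {a b : ℕ} (hb₁ : 1 ≤ b) (hb₂ : b ≤ p)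
    {y : Finset (ℕ × ℕ)} :
    y ∈ (cylPre h p).skel 2 ∧ circleEdge p a b ⊆ y ↔
      ∃ a', 1 ≤ a' ∧ a' + 1 ≤ h ∧ (a = a' ∨ a = a' + 1) ∧ y = square p a' b := by
  rw [mem_skel_two_iff (by omega)]
  constructor
  · rintro ⟨⟨a', b', ha₁, ha₂, hb₁', hb₂', rfl⟩, hsub⟩
    obtain ⟨ha, rfl⟩ := (circleEdge_subset_square_iff hp hb₁ hb₂ hb₁' hb₂').1 hsub
    exact ⟨a', ha₁, ha₂, ha, rfl⟩
  · rintro ⟨a', ha₁, ha₂, ha, rfl⟩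
    exact ⟨⟨a', b, ha₁, ha₂, hb₁, hb₂, rfl⟩,
      (circleEdge_subset_square_iff hp hb₁ hb₂ hb₁ hb₂).2 ⟨ha, rfl⟩⟩

-- The unique square is at height `1` on the bottom circle and `h - 1` on the top one.
lemma cofaces_circleEdge_of_end (hh : 2 ≤ h) (hp : 3 ≤ p) {a b : ℕ} (ha : a = 1 ∨ a = h)
    (hb₁ : 1 ≤ b) (hb₂ : b ≤ p) :
    {y | y ∈ (cylPre h p).skel 2 ∧ circleEdge p a b ⊆ y} = {square p (min a (h - 1)) b} := by
  ext y
  rw [Set.mem_ofPred_eq, cofaces_circleEdge hp hb₁ hb₂, Set.mem_singleton_iff]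
  constructor
  · rintro ⟨a', ha₁, ha₂, ha', rfl⟩
    rw [show min a (h - 1) = a' by omega]
  · rintro rfl
    exact ⟨min a (h - 1), by omega, by omega, by omega, rfl⟩

lemma isBoundaryEdge_iff (hh : 2 ≤ h) (hp : 3 ≤ p) {x : Finset (ℕ × ℕ)} :
    IsBoundaryEdge (cylPre h p) x ↔
      ∃ a b, (a = 1 ∨ a = h) ∧ 1 ≤ b ∧ b ≤ p ∧ x = circleEdge p a b := by
  constructor
  · intro hx
    obtain ⟨a, b, ha₁, hb₁, hb₂, ⟨ha₂, rfl⟩ | ⟨ha₂, rfl⟩⟩ := (mem_skel_one_iff (by omega)).1 hx.1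
    · obtain ⟨b', hb₁', hb₂', hb'⟩ := exists_residue_succ_eq hb₁ hb₂
      have hne : b' ≠ b := by
        rw [residue_succ hb₁' hb₂'] at hb'
        split_ifs at hb' <;> omega
      have hsq : square p a b ∈ (cylPre h p).skel 2 ∧ axialEdge a b ⊆ square p a b :=
        ⟨(mem_skel_two_iff (by omega)).2 ⟨a, b, ha₁, ha₂, hb₁, hb₂, rfl⟩,
          by simp [axialEdge, square, Finset.insert_subset_iff]⟩
      have hsq' : square p a b' ∈ (cylPre h p).skel 2 ∧ axialEdge a b ⊆ square p a b' :=
        ⟨(mem_skel_two_iff (by omega)).2 ⟨a, b', ha₁, ha₂, hb₁', hb₂', rfl⟩,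
          by simp [axialEdge, square, hb', Finset.insert_subset_iff]⟩
      refine absurd hx (not_isBoundaryEdge_of_ne hsq hsq' ?_)
      rw [Ne, square_inj hp hb₁ hb₂ hb₁' hb₂']
      omega
    · by_cases hend : a = 1 ∨ a = h
      · exact ⟨a, b, hend, hb₁, hb₂, rfl⟩
      have hsq := (cofaces_circleEdge (h := h) (a := a) hp hb₁ hb₂).2
        ⟨a, ha₁, by omega, Or.inl rfl, rfl⟩
      have hsq' := (cofaces_circleEdge (h := h) (a := a) hp hb₁ hb₂).2
        ⟨a - 1, by omega, by omega, Or.inr (by omega), rfl⟩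
      refine absurd hx (not_isBoundaryEdge_of_ne hsq hsq' ?_)
      rw [Ne, square_inj hp hb₁ hb₂ hb₁ hb₂]
      omega
  · rintro ⟨a, b, ha, hb₁, hb₂, rfl⟩
    refine ⟨(mem_skel_one_iff (by omega)).2 ⟨a, b, by omega, hb₁, hb₂, Or.inr ⟨by omega, rfl⟩⟩, ?_⟩
    rw [cofaces_circleEdge_of_end hh hp ha hb₁ hb₂, Set.ncard_singleton]

lemma exists_isBoundaryEdge_mem_iff (hh : 2 ≤ h) (hp : 3 ≤ p) {v : ℕ × ℕ} :
    (∃ x, IsBoundaryEdge (cylPre h p) x ∧ v ∈ x) ↔ (v.1 = 1 ∨ v.1 = h) ∧ 1 ≤ v.2 ∧ v.2 ≤ p := by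
  simp only [isBoundaryEdge_iff hh hp]
  constructor
  · rintro ⟨x, ⟨a, b, ha, hb₁, hb₂, rfl⟩, hv⟩
    simp only [circleEdge, Finset.mem_insert, Finset.mem_singleton] at hv
    rcases hv with rfl | rfl
    exacts [⟨ha, hb₁, hb₂⟩, ⟨ha, residue_pos _, residue_le (by omega) _⟩]
  · rintro ⟨ha, hb₁, hb₂⟩
    exact ⟨circleEdge p v.1 v.2, ⟨v.1, v.2, ha, hb₁, hb₂, rfl⟩, by simp [circleEdge]⟩

lemma boundaryGraph_adj_iff (hh : 2 ≤ h) (hp : 3 ≤ p)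
    {u v : {v : ℕ × ℕ // ∃ x, IsBoundaryEdge (cylPre h p) x ∧ v ∈ x}} :
    (boundaryGraph (cylPre h p)).Adj u v ↔
      u.1.1 = v.1.1 ∧ (v.1.2 = residue p (u.1.2 + 1) ∨ u.1.2 = residue p (v.1.2 + 1)) := by
  obtain ⟨⟨a, b⟩, hu⟩ := u
  obtain ⟨⟨a', b'⟩, hv⟩ := v
  obtain ⟨ha, hb₁, hb₂⟩ := (exists_isBoundaryEdge_mem_iff hh hp).1 hu
  obtain ⟨-, hb₁', hb₂'⟩ := (exists_isBoundaryEdge_mem_iff hh hp).1 hv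
  simp only [boundaryGraph, isBoundaryEdge_iff hh hp, ne_eq, Subtype.mk.injEq]
  constructor
  · rintro ⟨hne, x, ⟨c, d, -, -, -, rfl⟩, hux, hvx⟩
    simp only [circleEdge, Finset.mem_insert, Finset.mem_singleton, Prod.mk.injEq] at hux hvx
    rcases hux with ⟨rfl, rfl⟩ | ⟨rfl, rfl⟩ <;> rcases hvx with ⟨rfl, rfl⟩ | ⟨rfl, rfl⟩ <;>
      simp_all
  · rintro ⟨rfl, rfl | rfl⟩
    · exact ⟨fun heq => residue_succ_ne (by omega) hb₁ hb₂ (Prod.ext_iff.1 heq).2.symm,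
        circleEdge p a b, ⟨a, b, ha, hb₁, hb₂, rfl⟩, by simp [circleEdge], by simp [circleEdge]⟩
    · exact ⟨fun heq => residue_succ_ne (by omega) hb₁' hb₂' (Prod.ext_iff.1 heq).2,
        circleEdge p a b', ⟨a, b', ha, hb₁', hb₂', rfl⟩, by simp [circleEdge], by simp [circleEdge]⟩

def boundaryToSum (h p : ℕ) (v : {v : ℕ × ℕ // ∃ x, IsBoundaryEdge (cylPre h p) x ∧ v ∈ x}) :
    ZMod p ⊕ ZMod p :=
  if v.1.1 = 1 then .inl v.1.2 else .inr v.1.2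

lemma boundaryToSum_bijective (hh : 2 ≤ h) (hp : 3 ≤ p) :
    Function.Bijective (boundaryToSum h p) := by
  have : NeZero p := ⟨by omega⟩
  constructor
  · intro u v heq
    obtain ⟨ha, hb₁, hb₂⟩ := (exists_isBoundaryEdge_mem_iff hh hp).1 u.2
    obtain ⟨ha', hb₁', hb₂'⟩ := (exists_isBoundaryEdge_mem_iff hh hp).1 v.2
    simp only [boundaryToSum] at heq
    refine Subtype.ext (Prod.ext ?_ (natCast_injOn_Icc ⟨hb₁, hb₂⟩ ⟨hb₁', hb₂'⟩ ?_)) <;>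
      split_ifs at heq <;> simp_all
  · rintro (i | i) <;> obtain ⟨b, hb₁, hb₂, rfl⟩ := exists_natCast_eq i
    · exact ⟨⟨(1, b), (exists_isBoundaryEdge_mem_iff hh hp).2 ⟨Or.inl rfl, hb₁, hb₂⟩⟩,
        by simp [boundaryToSum]⟩
    · exact ⟨⟨(h, b), (exists_isBoundaryEdge_mem_iff hh hp).2 ⟨Or.inr rfl, hb₁, hb₂⟩⟩,
        by simp [boundaryToSum, show h ≠ 1 by omega]⟩

lemma graphSum_adj_boundaryToSum_iff (hh : 2 ≤ h) (hp : 3 ≤ p)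
    (u v : {v : ℕ × ℕ // ∃ x, IsBoundaryEdge (cylPre h p) x ∧ v ∈ x}) :
    (graphSum (cycGraph p) (cycGraph p)).Adj (boundaryToSum h p u) (boundaryToSum h p v) ↔
      (boundaryGraph (cylPre h p)).Adj u v := by
  obtain ⟨ha, hb₁, hb₂⟩ := (exists_isBoundaryEdge_mem_iff hh hp).1 u.2
  obtain ⟨ha', hb₁', hb₂'⟩ := (exists_isBoundaryEdge_mem_iff hh hp).1 v.2
  rw [boundaryGraph_adj_iff hh hp, ← cycGraph_adj_natCast_iff (by omega) hb₁ hb₂ hb₁' hb₂']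
  simp only [boundaryToSum, graphSum]
  split_ifs with hu hv hv <;> simp [hu, hv] <;> omega

end Cyl

/-- For `h, p ≥ 3`, the boundary graph of the cylinder `Cyl_{h,p}` is isomorphic
to the disjoint union of two cycle graphs of length `p`. -/
theorem cyl_boundary_iso (h p : ℕ) (hh : 3 ≤ h) (hp : 3 ≤ p) :
    Nonempty (boundaryGraph (cylPre h p) ≃g graphSum (cycGraph p) (cycGraph p)) :=
  ⟨⟨Equiv.ofBijective _ (Cyl.boundaryToSum_bijective (by omega) hp),
    Cyl.graphSum_adj_boundaryToSum_iff (by omega) hp _ _⟩⟩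

end TDL
end
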